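/- arXiv:2504.20795 — 3 statements merged into one kernel-verified Lean document; each statement's English description precedes it below -/
import Mathlib

section
/- Let G = (V, E, p) be an uncertain graph, k an integer, η a real number, and u a vertex. If u belongs to a vertex set C ⊆ V satisfying the (k+1, η)-constraint, then the k-probability of u in the whole graph satisfies k-prob(u, V) ≥ η. (Paper's Corollary 1: k-prob(u, G) ≥ η-thres_{k+1}(u).) -/
/-!
Both steps of the inequality are monotonicity properties of the probability that at least
`k` of finitely many independent events occur: it decreases as `k` grows, and it increases
as events are added, since conditioning on the new event leaves a mixture of the thresholds
`k` and `k - 1`. Hence `k-prob(u, V) ≥ k-prob(u, C) ≥ (k+1)-prob(u, C) ≥ η`.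
-/

open Finset

/-- The `k`-probability of a vertex `u` in the subgraph of `G` induced by the vertex set
`C`: the probability that `u` has at least `k` neighbors within `C`, where each edge
`uv` exists independently with probability `p u v`. -/
noncomputable def kProb {V : Type*} [Fintype V] [DecidableEq V] (G : SimpleGraph V)
    [DecidableRel G.Adj] (p : V → V → ℝ) (k : ℕ) (C : Finset V) (u : V) : ℝ :=
  ∑ T ∈ ((C.filter (fun v => G.Adj u v)).powerset).filter (fun T => k ≤ T.card),
    (∏ v ∈ T, p u v) * ∏ v ∈ (C.filter (fun v => G.Adj u v)) \ T, (1 - p u v)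

section ProbAtLeast

variable {ι : Type*} [DecidableEq ι]

noncomputable def probAtLeast (w : ι → ℝ) (k : ℕ) (s : Finset ι) : ℝ :=
  ∑ T ∈ s.powerset.filter (fun T => k ≤ T.card), (∏ i ∈ T, w i) * ∏ i ∈ s \ T, (1 - w i)

variable {w : ι → ℝ}

lemma prod_mul_prod_one_sub_nonneg {s T : Finset ι} (hw : ∀ i ∈ s, w i ∈ Set.Icc (0 : ℝ) 1)
    (hT : T ⊆ s) : 0 ≤ (∏ i ∈ T, w i) * ∏ i ∈ s \ T, (1 - w i) :=
  mul_nonneg (prod_nonneg fun i hi => (hw i (hT hi)).1)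
    (prod_nonneg fun i hi => sub_nonneg.2 (hw i (mem_sdiff.1 hi).1).2)

lemma probAtLeast_antitone {s : Finset ι} (hw : ∀ i ∈ s, w i ∈ Set.Icc (0 : ℝ) 1)
    {j k : ℕ} (hjk : j ≤ k) : probAtLeast w k s ≤ probAtLeast w j s :=
  sum_le_sum_of_subset_of_nonneg (monotone_filter_right _ fun _ _ h => hjk.trans h)
    fun _ hT _ => prod_mul_prod_one_sub_nonneg hw (mem_powerset.1 (mem_filter.1 hT).1)

/-- Conditioning on the event `a`: the remaining events must supply `k` successes if `a`
fails and `k - 1` if it occurs (at `k = 0` both are certain, matching `0 - 1 = 0`). -/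
lemma probAtLeast_insert (w : ι → ℝ) {s : Finset ι} {a : ι} (ha : a ∉ s) (k : ℕ) :
    probAtLeast w k (insert a s) =
      (1 - w a) * probAtLeast w k s + w a * probAtLeast w (k - 1) s := by
  simp only [probAtLeast, sum_filter, sum_powerset_insert ha, mul_sum, ← sum_add_distrib]
  refine sum_congr rfl fun T hT => ?_
  have haT : a ∉ T := fun h => ha (mem_powerset.1 hT h)
  rw [card_insert_of_notMem haT, insert_sdiff_of_notMem _ haT, insert_sdiff_insert,
    sdiff_insert_of_notMem ha, prod_insert (fun h => ha (mem_sdiff.1 h).1),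
    prod_insert haT]
  split_ifs <;> first | omega | ring

lemma probAtLeast_le_insert {s : Finset ι} {a : ι}
    (hw : ∀ i ∈ insert a s, w i ∈ Set.Icc (0 : ℝ) 1) (k : ℕ) :
    probAtLeast w k s ≤ probAtLeast w k (insert a s) := by
  by_cases ha : a ∈ s
  · rw [insert_eq_of_mem ha]
  have hk : probAtLeast w k s ≤ probAtLeast w (k - 1) s :=
    probAtLeast_antitone (fun i hi => hw i (mem_insert_of_mem hi)) (Nat.sub_le k 1)
  have ⟨ha₀, ha₁⟩ := hw a (mem_insert_self a s)
  rw [probAtLeast_insert w ha k]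
  nlinarith

lemma probAtLeast_mono {s t : Finset ι} (hst : s ⊆ t)
    (hw : ∀ i ∈ t, w i ∈ Set.Icc (0 : ℝ) 1) (k : ℕ) :
    probAtLeast w k s ≤ probAtLeast w k t := by
  suffices h : probAtLeast w k s ≤ probAtLeast w k (s ∪ t) by
    rwa [union_eq_right.2 hst] at h
  refine induction_on' (motive := fun r => probAtLeast w k s ≤ probAtLeast w k (s ∪ r)) t
    (by simp) fun a r ha hr _ ih => ?_
  rw [union_insert]
  refine ih.trans (probAtLeast_le_insert (fun i hi => hw i ?_) k)
  rcases mem_insert.1 hi with rfl | hi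
  · exact ha
  · rcases mem_union.1 hi with hi | hi
    exacts [hst hi, hr hi]

end ProbAtLeast

lemma kProb_eq_probAtLeast {V : Type*} [Fintype V] [DecidableEq V] (G : SimpleGraph V)
    [DecidableRel G.Adj] (p : V → V → ℝ) (k : ℕ) (C : Finset V) (u : V) :
    kProb G p k C u = probAtLeast (p u) k (C.filter (G.Adj u)) := rfl

theorem kProb_whole_ge_of_succ_constraint_general {V : Type*} [Fintype V] [DecidableEq V]
    (G : SimpleGraph V) [DecidableRel G.Adj] (p : V → V → ℝ)
    (hp : ∀ u v, G.Adj u v → 0 ≤ p u v ∧ p u v ≤ 1)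
    (k : ℕ) (η : ℝ) (u : V) (C : Finset V) (hu : u ∈ C)
    (hC : ∀ v ∈ C, η ≤ kProb G p (k + 1) C v) :
    η ≤ kProb G p k Finset.univ u := by
  have hw : ∀ v ∈ univ.filter (G.Adj u), p u v ∈ Set.Icc (0 : ℝ) 1 :=
    fun v hv => hp u v (mem_filter.1 hv).2
  have hsub : C.filter (G.Adj u) ⊆ univ.filter (G.Adj u) :=
    filter_subset_filter _ (subset_univ C)
  rw [kProb_eq_probAtLeast]
  calc η ≤ kProb G p (k + 1) C u := hC u hu
    _ = probAtLeast (p u) (k + 1) (C.filter (G.Adj u)) := kProb_eq_probAtLeast ..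
    _ ≤ probAtLeast (p u) k (C.filter (G.Adj u)) :=
        probAtLeast_antitone (fun v hv => hw v (hsub hv)) k.le_succ
    _ ≤ probAtLeast (p u) k (univ.filter (G.Adj u)) := probAtLeast_mono hsub hw k

/-- Paper's Corollary 1: if `u` belongs to a vertex set `C` satisfying the
`(k+1, η)`-constraint, then the `k`-probability of `u` in the whole graph is at
least `η`, i.e. `k-prob(u, G) ≥ η-thres_{k+1}(u)`. -/
theorem kProb_whole_ge_of_succ_constraint {V : Type*} [Fintype V] [DecidableEq V]
    (G : SimpleGraph V) [DecidableRel G.Adj] (p : V → V → ℝ)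
    (hsymm : ∀ u v, p u v = p v u) (hp : ∀ u v, G.Adj u v → 0 ≤ p u v ∧ p u v ≤ 1)
    (k : ℕ) (η : ℝ) (u : V) (C : Finset V) (hu : u ∈ C)
    (hC : ∀ v ∈ C, η ≤ kProb G p (k + 1) C v) :
    η ≤ kProb G p k Finset.univ u :=
  kProb_whole_ge_of_succ_constraint_general G p hp k η u C hu hC
end

section
/- Let I be a finite index set, p : I → ℝ with 0 ≤ p(i) ≤ 1 for all i, and let e ∈ I with p(e) < 1. Then for every integer i ≥ 1, P_{I\{e}}(count = i) = (P_I(count = i) − p(e) · P_{I\{e}}(count = i − 1)) / (1 − p(e)), and P_{I\{e}}(count = 0) = P_I(count = 0) / (1 − p(e)). (The division-based edge-deletion update formula, Equation (6) in the paper.) -/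
open Finset

/-- Possible-world weight: the probability that exactly the indices in `S` occur. -/
noncomputable def pbWeight {α : Type*} [DecidableEq α] (I : Finset α) (p : α → ℝ)
    (S : Finset α) : ℝ :=
  (∏ i ∈ S, p i) * ∏ i ∈ I \ S, (1 - p i)

/-- Poisson binomial point probability `P_I(count = i)`. -/
noncomputable def pbEq {α : Type*} [DecidableEq α] (I : Finset α) (p : α → ℝ)
    (i : ℕ) : ℝ :=
  ∑ S ∈ I.powerset.filter (fun S => S.card = i), pbWeight I p S

/-! Conditioning on the edge `e`: a world of `insert e J` either omits `e` (weight factor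
`1 - p e`) or contains it (factor `p e`, and one edge fewer among `J`). Solving the resulting
recurrence `P_I(i) = p e · P_J(i - 1) + (1 - p e) · P_J(i)` for `P_J(i)` gives the update. -/

section Recurrence

variable {α : Type*} [DecidableEq α] {J T : Finset α} {e : α} (p : α → ℝ)

lemma pbWeight_insert_of_notMem (heJ : e ∉ J) (heT : e ∉ T) :
    pbWeight (insert e J) p T = (1 - p e) * pbWeight J p T := by
  have hdiff : insert e J \ T = insert e (J \ T) := insert_sdiff_of_notMem J heT
  rw [pbWeight, pbWeight, hdiff, prod_insert fun h => heJ (mem_sdiff.1 h).1]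
  ring

lemma pbWeight_insert_insert (heJ : e ∉ J) (heT : e ∉ T) :
    pbWeight (insert e J) p (insert e T) = p e * pbWeight J p T := by
  have hdiff : insert e J \ insert e T = J \ T := by
    rw [insert_sdiff_insert, sdiff_insert_of_notMem heJ]
  rw [pbWeight, pbWeight, hdiff, prod_insert heT]
  ring

lemma pbEq_insert (heJ : e ∉ J) (n : ℕ) :
    pbEq (insert e J) p n =
      (1 - p e) * pbEq J p n + p e * ∑ T ∈ J.powerset with T.card + 1 = n, pbWeight J p T := by
  simp only [pbEq, sum_filter, sum_powerset_insert heJ, mul_sum]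
  refine congrArg₂ (· + ·) (sum_congr rfl fun T hT => ?_) (sum_congr rfl fun T hT => ?_) <;>
    have heT : e ∉ T := fun h => heJ (mem_powerset.1 hT h)
  · rw [pbWeight_insert_of_notMem p heJ heT, mul_ite, mul_zero]
  · rw [pbWeight_insert_insert p heJ heT, card_insert_of_notMem heT, mul_ite, mul_zero]

lemma pbEq_insert_succ (heJ : e ∉ J) (n : ℕ) :
    pbEq (insert e J) p (n + 1) = (1 - p e) * pbEq J p (n + 1) + p e * pbEq J p n := by
  simp only [pbEq_insert p heJ, Nat.add_right_cancel_iff]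
  rfl

lemma pbEq_insert_zero (heJ : e ∉ J) :
    pbEq (insert e J) p 0 = (1 - p e) * pbEq J p 0 := by
  simp [pbEq_insert p heJ]

end Recurrence

theorem pbEq_deletion_update_general {α : Type*} [DecidableEq α] (I : Finset α) (p : α → ℝ)
    (e : α) (he : e ∈ I) (hpe : p e < 1) :
    (∀ i : ℕ, 1 ≤ i →
      pbEq (I.erase e) p i = (pbEq I p i - p e * pbEq (I.erase e) p (i - 1)) / (1 - p e)) ∧
    pbEq (I.erase e) p 0 = pbEq I p 0 / (1 - p e) := by
  obtain ⟨J, heJ, rfl⟩ : ∃ J, e ∉ J ∧ I = insert e J :=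
    ⟨I.erase e, notMem_erase e I, (insert_erase he).symm⟩
  have hpe' : 1 - p e ≠ 0 := sub_ne_zero.2 hpe.ne'
  rw [erase_insert heJ]
  refine ⟨fun i hi => ?_, ?_⟩
  · obtain ⟨n, rfl⟩ := Nat.exists_eq_add_of_le' hi
    rw [eq_div_iff hpe', pbEq_insert_succ p heJ, Nat.add_sub_cancel]
    ring
  · rw [eq_div_iff hpe', pbEq_insert_zero p heJ, mul_comm]

/-- The division-based edge-deletion update formula (Equation (6) of the paper). -/
theorem pbEq_deletion_update {α : Type*} [DecidableEq α] (I : Finset α) (p : α → ℝ)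
    (hp : ∀ i ∈ I, 0 ≤ p i ∧ p i ≤ 1) (e : α) (he : e ∈ I) (hpe : p e < 1) :
    (∀ i : ℕ, 1 ≤ i →
      pbEq (I.erase e) p i = (pbEq I p i - p e * pbEq (I.erase e) p (i - 1)) / (1 - p e)) ∧
    pbEq (I.erase e) p 0 = pbEq I p 0 / (1 - p e) :=
  pbEq_deletion_update_general I p e he hpe
end

section
/- Let I be a finite index set with |I| = d, and let p : I → ℝ with 0 ≤ p(i) ≤ 1 for all i. If q ∈ [0,1] satisfies q ≤ p(i) for every i ∈ I, then for every integer k with 0 ≤ k ≤ d, P_I(count ≥ k) ≥ Σ_{j=k}^{d} C(d, j) · q^j · (1 − q)^{d−j}, where C(d, j) is the binomial coefficient. (The lower bound of Equation (7): the binomial tail at the minimum incident edge probability lower-bounds the k-probability.) -/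
open Finset

/-- Poisson binomial tail probability `P_I(count ≥ k)`. -/
noncomputable def pbTail {α : Type*} [DecidableEq α] (I : Finset α) (p : α → ℝ)
    (k : ℕ) : ℝ :=
  ∑ S ∈ I.powerset.filter (fun S => k ≤ S.card), pbWeight I p S

/-!
Conditioning on whether a fixed index `a` occurs shows that `P_I(count ≥ k)` is affine in `p a`,
with slope `P_{I∖a}(count ≥ k - 1) - P_{I∖a}(count ≥ k) ≥ 0`. Hence the tail is nondecreasing in
each `p i` on `[0, 1]`, and lowering every `p i` to `q` yields the binomial tail.
-/

section

variable {α : Type*} [DecidableEq α]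

lemma pbWeight_nonneg {I S : Finset α} {p : α → ℝ} (hp : ∀ i ∈ I, 0 ≤ p i ∧ p i ≤ 1)
    (hS : S ⊆ I) : 0 ≤ pbWeight I p S :=
  mul_nonneg (prod_nonneg fun i hi => (hp i (hS hi)).1)
    (prod_nonneg fun i hi => sub_nonneg.2 (hp i (mem_sdiff.1 hi).1).2)

lemma pbWeight_insert_insert_s6 {a : α} {I T : Finset α} (ha : a ∉ I) (haT : a ∉ T)
    (p : α → ℝ) : pbWeight (insert a I) p (insert a T) = p a * pbWeight I p T := by
  rw [pbWeight, pbWeight, insert_sdiff_insert, sdiff_insert_of_notMem ha, prod_insert haT,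
    mul_assoc]

lemma pbWeight_insert {a : α} {I T : Finset α} (ha : a ∉ I) (haT : a ∉ T) (p : α → ℝ) :
    pbWeight (insert a I) p T = (1 - p a) * pbWeight I p T := by
  rw [pbWeight, pbWeight, insert_sdiff_of_notMem _ haT,
    prod_insert fun h => ha (mem_sdiff.1 h).1, mul_left_comm]

lemma pbTail_insert {a : α} {I : Finset α} (ha : a ∉ I) (p : α → ℝ) (k : ℕ) :
    pbTail (insert a I) p k = p a * pbTail I p (k - 1) + (1 - p a) * pbTail I p k := by
  simp only [pbTail, sum_filter, sum_powerset_insert ha, mul_sum, mul_ite, mul_zero]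
  rw [add_comm]
  congr 1 <;> refine sum_congr rfl fun T hT => ?_
  · have haT : a ∉ T := fun h => ha (mem_powerset.1 hT h)
    rw [card_insert_of_notMem haT, pbWeight_insert_insert_s6 ha haT]
    exact if_congr (by omega) rfl rfl
  · rw [pbWeight_insert ha fun h => ha (mem_powerset.1 hT h)]

lemma pbTail_antitone {I : Finset α} {p : α → ℝ} (hp : ∀ i ∈ I, 0 ≤ p i ∧ p i ≤ 1) :
    Antitone (pbTail I p) := fun _ _ hkl =>
  sum_le_sum_of_subset_of_nonneg (monotone_filter_right _ fun _ _ h => hkl.trans h)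
    fun _ hS _ => pbWeight_nonneg hp (mem_powerset.1 (mem_filter.1 hS).1)

lemma pbTail_mono {I : Finset α} {p p' : α → ℝ} (hp'0 : ∀ i ∈ I, 0 ≤ p' i)
    (hle : ∀ i ∈ I, p' i ≤ p i) (hp1 : ∀ i ∈ I, p i ≤ 1) (k : ℕ) :
    pbTail I p' k ≤ pbTail I p k := by
  induction I using Finset.induction_on generalizing k with
  | empty => simp [pbTail, pbWeight, sum_filter]
  | insert a I ha ih =>
    simp only [mem_insert, forall_eq_or_imp] at hp'0 hle hp1
    have hp : ∀ i ∈ I, 0 ≤ p i ∧ p i ≤ 1 := fun i hi =>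
      ⟨(hp'0.2 i hi).trans (hle.2 i hi), hp1.2 i hi⟩
    have hA := ih hp'0.2 hle.2 hp1.2 (k - 1)
    have hB := ih hp'0.2 hle.2 hp1.2 k
    have hslope : 0 ≤ pbTail I p (k - 1) - pbTail I p k :=
      sub_nonneg.2 (pbTail_antitone hp (Nat.sub_le k 1))
    have hp'1 : 0 ≤ 1 - p' a := by linarith
    rw [pbTail_insert ha, pbTail_insert ha]
    calc p' a * pbTail I p' (k - 1) + (1 - p' a) * pbTail I p' k
        ≤ p' a * pbTail I p (k - 1) + (1 - p' a) * pbTail I p k := by gcongr; exact hp'0.1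
      _ = pbTail I p k + p' a * (pbTail I p (k - 1) - pbTail I p k) := by ring
      _ ≤ pbTail I p k + p a * (pbTail I p (k - 1) - pbTail I p k) := by
        gcongr
        exact hle.1
      _ = p a * pbTail I p (k - 1) + (1 - p a) * pbTail I p k := by ring

lemma pbWeight_const {I S : Finset α} (hS : S ⊆ I) (q : ℝ) :
    pbWeight I (fun _ => q) S = q ^ #S * (1 - q) ^ (#I - #S) := by
  rw [pbWeight, prod_const, prod_const, card_sdiff_of_subset hS]

lemma pbTail_const (I : Finset α) (q : ℝ) (k : ℕ) :
    pbTail I (fun _ => q) k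
      = ∑ j ∈ Icc k #I, ((#I).choose j : ℝ) * q ^ j * (1 - q) ^ (#I - j) := by
  have hIcc : (range (#I + 1)).filter (k ≤ ·) = Icc k #I := by
    ext j
    simp only [mem_filter, mem_range, mem_Icc]
    omega
  rw [pbTail, sum_filter, sum_congr rfl fun S hS => by rw [pbWeight_const (mem_powerset.1 hS)],
    sum_powerset_apply_card (fun j => if k ≤ j then q ^ j * (1 - q) ^ (#I - j) else 0)]
  simp only [smul_ite, smul_zero, nsmul_eq_mul, ← sum_filter, hIcc, mul_assoc]

end

theorem pbTail_ge_binomial_tail_general {α : Type*} [DecidableEq α] (I : Finset α) (p : α → ℝ)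
    (hp : ∀ i ∈ I, 0 ≤ p i ∧ p i ≤ 1) (d : ℕ) (hd : I.card = d)
    (q : ℝ) (hq0 : 0 ≤ q) (hqle : ∀ i ∈ I, q ≤ p i)
    (k : ℕ) :
    pbTail I p k ≥ ∑ j ∈ Finset.Icc k d, (d.choose j : ℝ) * q ^ j * (1 - q) ^ (d - j) := by
  subst hd
  rw [← pbTail_const]
  exact pbTail_mono (fun _ _ => hq0) hqle (fun i hi => (hp i hi).2) k

/-- The binomial-tail lower bound of Equation (7): the binomial tail at the minimum
incident edge probability lower-bounds the `k`-probability. -/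
theorem pbTail_ge_binomial_tail {α : Type*} [DecidableEq α] (I : Finset α) (p : α → ℝ)
    (hp : ∀ i ∈ I, 0 ≤ p i ∧ p i ≤ 1) (d : ℕ) (hd : I.card = d)
    (q : ℝ) (hq0 : 0 ≤ q) (hq1 : q ≤ 1) (hqle : ∀ i ∈ I, q ≤ p i)
    (k : ℕ) (hk : k ≤ d) :
    pbTail I p k ≥ ∑ j ∈ Finset.Icc k d, (d.choose j : ℝ) * q ^ j * (1 - q) ^ (d - j) :=
  pbTail_ge_binomial_tail_general I p hp d hd q hq0 hqle k
end
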